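/- Energy of a history state with valid input: In the setting of the Kitaev Hamiltonian H = H_i + H_p + H_o above, let ξ ∈ W be a unit vector with P_j ξ = 0 for all j ∈ A_in, and let ψ_ξ = (T+1)^{−1/2} Σ_{t=0}^T |t⟩ ⊗ U_t ⋯ U_1 ξ be its history state (a unit vector). Then ⟨ψ_ξ, H ψ_ξ⟩ = (1/(T+1)) Σ_{j ∈ A_out} ‖P_j (U_T ⋯ U_1 ξ)‖²; that is, the energy of the history state equals the rejection weight of the computation divided by T+1. -/

import Mathlib

open scoped BigOperators

noncomputable section

/-- The `N`-qubit Hilbert space `W = ⨂_{j=1}^N ℂ²`, realized as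
`ℓ²`-functions on the set of computational basis configurations. -/
abbrev QubitSpace (N : ℕ) := EuclideanSpace ℂ (Fin N → Fin 2)

/-- The orthogonal projector onto `|1⟩` on qubit `j` (tensored with the identity on
the remaining qubits). -/
def qubitOneProj (N : ℕ) (j : Fin N) : QubitSpace N →ₗ[ℂ] QubitSpace N where
  toFun ψ := WithLp.toLp 2 (fun σ => if σ j = 1 then ψ σ else 0)
  map_add' ψ χ := by
    ext σ
    by_cases h : σ j = 1 <;> simp [h]
  map_smul' a ψ := by
    ext σ
    by_cases h : σ j = 1 <;> simp [h]

/-- `histFun T U t` is the composite `U_t ∘ U_{t-1} ∘ ⋯ ∘ U_1` of the first `t`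
circuit unitaries (the empty composite for `t = 0` being the identity). -/
def histFun {W : Type*} [NormedAddCommGroup W] [InnerProductSpace ℂ W]
    (T : ℕ) (U : Fin T → (W ≃ₗᵢ[ℂ] W)) : ℕ → W → W
  | 0 => id
  | n + 1 => if h : n < T then (fun w => U ⟨n, h⟩ (histFun T U n w)) else histFun T U n

/-- Feynman–Kitaev propagation Hamiltonian
`H_p = (1/2) ∑_{t=0}^{T-1} [(|t⟩⟨t| + |t+1⟩⟨t+1|) ⊗ 1 - |t+1⟩⟨t| ⊗ U_{t+1} - |t⟩⟨t+1| ⊗ U_{t+1}†]`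
acting on `ℂ^{T+1} ⊗ W`, realized as the space of functions `Fin (T+1) → W`. -/
def propHam {W : Type*} [NormedAddCommGroup W] [InnerProductSpace ℂ W]
    (T : ℕ) (U : Fin T → (W ≃ₗᵢ[ℂ] W)) :
    ((Fin (T + 1) → W) →ₗ[ℂ] (Fin (T + 1) → W)) :=
  (2 : ℂ)⁻¹ • ∑ t : Fin T,
    ((LinearMap.single ℂ (fun _ : Fin (T + 1) => W) t.castSucc) ∘ₗ
        ((LinearMap.proj t.castSucc : (∀ _ : Fin (T + 1), W) →ₗ[ℂ] W) -
          ((U t).symm.toLinearEquiv.toLinearMap ∘ₗ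
            (LinearMap.proj t.succ : (∀ _ : Fin (T + 1), W) →ₗ[ℂ] W))) +
      (LinearMap.single ℂ (fun _ : Fin (T + 1) => W) t.succ) ∘ₗ
        ((LinearMap.proj t.succ : (∀ _ : Fin (T + 1), W) →ₗ[ℂ] W) -
          ((U t).toLinearEquiv.toLinearMap ∘ₗ
            (LinearMap.proj t.castSucc : (∀ _ : Fin (T + 1), W) →ₗ[ℂ] W))))

/-- The input penalty `H_i = |0⟩⟨0| ⊗ ∑_{j ∈ A_in} P_j`. -/
def inputHam (T N : ℕ) (Ain : Finset (Fin N)) :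
    ((Fin (T + 1) → QubitSpace N) →ₗ[ℂ] (Fin (T + 1) → QubitSpace N)) :=
  (LinearMap.single ℂ (fun _ : Fin (T + 1) => QubitSpace N) 0) ∘ₗ
    (∑ j ∈ Ain, qubitOneProj N j) ∘ₗ
      (LinearMap.proj 0 : (∀ _ : Fin (T + 1), QubitSpace N) →ₗ[ℂ] QubitSpace N)

/-- The output penalty `H_o = |T⟩⟨T| ⊗ ∑_{j ∈ A_out} P_j`. -/
def outputHam (T N : ℕ) (Aout : Finset (Fin N)) :
    ((Fin (T + 1) → QubitSpace N) →ₗ[ℂ] (Fin (T + 1) → QubitSpace N)) :=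
  (LinearMap.single ℂ (fun _ : Fin (T + 1) => QubitSpace N) (Fin.last T)) ∘ₗ
    (∑ j ∈ Aout, qubitOneProj N j) ∘ₗ
      (LinearMap.proj (Fin.last T) :
        (∀ _ : Fin (T + 1), QubitSpace N) →ₗ[ℂ] QubitSpace N)

/-- The Kitaev Hamiltonian `H = H_i + H_p + H_o`. -/
def kitaevHam (T N : ℕ) (U : Fin T → (QubitSpace N ≃ₗᵢ[ℂ] QubitSpace N))
    (Ain Aout : Finset (Fin N)) :
    ((Fin (T + 1) → QubitSpace N) →ₗ[ℂ] (Fin (T + 1) → QubitSpace N)) :=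
  inputHam T N Ain + propHam T U + outputHam T N Aout

/-! Consecutive components of a history state are related by the circuit, `ψ (t+1) = U_{t+1} (ψ t)`,
so every edge term of `H_p` annihilates it, and a valid input makes `H_i` vanish on it as well.
Only `H_o` contributes, and `P_j (c • x) = c • P_j x` with `‖c‖² = (T+1)⁻¹`. -/

theorem histFun_succ {W : Type*} [NormedAddCommGroup W] [InnerProductSpace ℂ W] {T : ℕ}
    (U : Fin T → (W ≃ₗᵢ[ℂ] W)) (t : Fin T) (w : W) :
    histFun T U ((t : ℕ) + 1) w = U t (histFun T U t w) := by
  simp [histFun]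

theorem propHam_apply_eq_zero {W : Type*} [NormedAddCommGroup W] [InnerProductSpace ℂ W]
    {T : ℕ} {U : Fin T → (W ≃ₗᵢ[ℂ] W)} {ψ : Fin (T + 1) → W}
    (hψ : ∀ t : Fin T, ψ t.succ = U t (ψ t.castSucc)) :
    propHam T U ψ = 0 := by
  simp [propHam, hψ]

theorem inputHam_apply_eq_zero {T N : ℕ} {Ain : Finset (Fin N)}
    {ψ : Fin (T + 1) → QubitSpace N} (hψ : ∀ j ∈ Ain, qubitOneProj N j (ψ 0) = 0) :
    inputHam T N Ain ψ = 0 := by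
  simp [inputHam, Finset.sum_eq_zero hψ]

theorem inner_qubitOneProj_self {N : ℕ} (j : Fin N) (x : QubitSpace N) :
    inner ℂ x (qubitOneProj N j x) = ((‖qubitOneProj N j x‖ ^ 2 : ℝ) : ℂ) := by
  have hproj : inner ℂ x (qubitOneProj N j x) = inner ℂ (qubitOneProj N j x) (qubitOneProj N j x) := by
    simp only [PiLp.inner_apply]
    refine Finset.sum_congr rfl fun σ _ => ?_
    by_cases h : σ j = 1 <;> simp [qubitOneProj, h]
  rw [hproj, inner_self_eq_norm_sq_to_K]
  norm_cast

theorem sum_inner_outputHam {T N : ℕ} (Aout : Finset (Fin N)) (ψ : Fin (T + 1) → QubitSpace N) :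
    ∑ t, inner ℂ (ψ t) (outputHam T N Aout ψ t) =
      ((∑ j ∈ Aout, ‖qubitOneProj N j (ψ (Fin.last T))‖ ^ 2 : ℝ) : ℂ) := by
  simp [outputHam, Pi.single_apply, apply_ite, inner_qubitOneProj_self]

theorem sum_inner_kitaevHam_of_propagates {T N : ℕ}
    {U : Fin T → (QubitSpace N ≃ₗᵢ[ℂ] QubitSpace N)} {Ain : Finset (Fin N)}
    (Aout : Finset (Fin N)) {ψ : Fin (T + 1) → QubitSpace N}
    (hprop : ∀ t : Fin T, ψ t.succ = U t (ψ t.castSucc))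
    (hin : ∀ j ∈ Ain, qubitOneProj N j (ψ 0) = 0) :
    ∑ t, inner ℂ (ψ t) (kitaevHam T N U Ain Aout ψ t) =
      ((∑ j ∈ Aout, ‖qubitOneProj N j (ψ (Fin.last T))‖ ^ 2 : ℝ) : ℂ) := by
  have hH : kitaevHam T N U Ain Aout ψ = outputHam T N Aout ψ := by
    simp [kitaevHam, inputHam_apply_eq_zero hin, propHam_apply_eq_zero hprop]
  rw [hH, sum_inner_outputHam]

theorem history_state_energy_general (T N : ℕ)
    (U : Fin T → (QubitSpace N ≃ₗᵢ[ℂ] QubitSpace N))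
    (Ain Aout : Finset (Fin N))
    (ξ : QubitSpace N)
    (hin : ∀ j ∈ Ain, qubitOneProj N j ξ = 0) :
    (∑ t, (inner ℂ ((fun t : Fin (T + 1) =>
          ((Real.sqrt (T + 1) : ℂ))⁻¹ • histFun T U t.val ξ) t)
        ((kitaevHam T N U Ain Aout) (fun t : Fin (T + 1) =>
          ((Real.sqrt (T + 1) : ℂ))⁻¹ • histFun T U t.val ξ) t) : ℂ)) =
      ((((T : ℝ) + 1)⁻¹ *
        ∑ j ∈ Aout, ‖qubitOneProj N j (histFun T U T ξ)‖ ^ 2 : ℝ) : ℂ) := by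
  rw [sum_inner_kitaevHam_of_propagates Aout (by simp [histFun_succ])
    fun j hj => by simp [histFun, hin j hj]]
  have hc : ‖((Real.sqrt (T + 1) : ℂ))⁻¹‖ ^ 2 = ((T : ℝ) + 1)⁻¹ := by
    rw [norm_inv, Complex.norm_real, Real.norm_of_nonneg (Real.sqrt_nonneg _), inv_pow,
      Real.sq_sqrt (by positivity)]
  simp only [Fin.val_last, map_smul, norm_smul, mul_pow, hc, Finset.mul_sum]

/-- **Energy of a history state with valid input.**  If `ξ` is a unit vector with
correctly initialized ancillae (`P_j ξ = 0` for `j ∈ A_in`), then the energy of its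
history state `ψ_ξ = (T+1)^{-1/2} ∑_t |t⟩ ⊗ U_t ⋯ U_1 ξ` with respect to
`H = H_i + H_p + H_o` equals the rejection weight of the computation divided by
`T + 1`. -/
theorem history_state_energy (T N : ℕ)
    (U : Fin T → (QubitSpace N ≃ₗᵢ[ℂ] QubitSpace N))
    (Ain Aout : Finset (Fin N))
    (ξ : QubitSpace N) (hξ : ‖ξ‖ = 1)
    (hin : ∀ j ∈ Ain, qubitOneProj N j ξ = 0) :
    (∑ t, (inner ℂ ((fun t : Fin (T + 1) =>
          ((Real.sqrt (T + 1) : ℂ))⁻¹ • histFun T U t.val ξ) t)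
        ((kitaevHam T N U Ain Aout) (fun t : Fin (T + 1) =>
          ((Real.sqrt (T + 1) : ℂ))⁻¹ • histFun T U t.val ξ) t) : ℂ)) =
      ((((T : ℝ) + 1)⁻¹ *
        ∑ j ∈ Aout, ‖qubitOneProj N j (histFun T U T ξ)‖ ^ 2 : ℝ) : ℂ) :=
  history_state_energy_general T N U Ain Aout ξ hin

end
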